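/- arXiv:1705.00901 — 2 statements merged into one kernel-verified Lean document; each statement's English description precedes it below -/
import Mathlib

section
/- There exist no elements x, y in ℚ(ζ₃) with x² + 13 y² = 2; equivalently, 2 is not a norm from ℚ(ζ₃)(√-13) to ℚ(ζ₃). -/
/-!
Since `13 ≡ 1 [MOD 3]`, Hensel's lemma lifts the root `3` of `X² + X + 1` modulo `13` to a primitive
cube root of unity in `ℚ_[13]`, so `ℚ(ζ₃)` embeds into `ℚ_[13]` and it suffices to show that
`x² + 13 y² = 2` has no `13`-adic solution. The valuations of `x²` and `13 y²` have different
parities, so by the ultrametric equality `x` and `y` are `13`-adic integers; reducing modulo `13`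
would then make `2` a square in `ZMod 13`, which it is not.
-/

open Polynomial

theorem PadicInt.exists_aeval_eq_zero_of_dvd {p : ℕ} [Fact p.Prime] {f : ℤ[X]} {a : ℤ}
    (hf : (p : ℤ) ∣ f.eval a) (hf' : ¬(p : ℤ) ∣ (derivative f).eval a) :
    ∃ z : ℤ_[p], aeval z f = 0 := by
  have aeval_intCast (g : ℤ[X]) : aeval (a : ℤ_[p]) g = ((g.eval a : ℤ) : ℤ_[p]) := by
    simpa using aeval_algebraMap_apply_eq_algebraMap_eval (A := ℤ_[p]) a g
  have hf_lt : ‖aeval (a : ℤ_[p]) f‖ < 1 := by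
    rwa [aeval_intCast, norm_int_lt_one_iff_dvd]
  have hf'_eq : ‖aeval (a : ℤ_[p]) (derivative f)‖ = 1 := by
    rw [aeval_intCast]
    exact (norm_le_one _).antisymm (not_lt.mp ((norm_int_lt_one_iff_dvd _).not.mpr hf'))
  obtain ⟨z, hz, -⟩ := hensels_lemma (F := f) (a := (a : ℤ_[p])) (by rwa [hf'_eq, one_pow])
  exact ⟨z, hz⟩

theorem Padic.exists_isPrimitiveRoot_of_dvd_cyclotomic_eval {p n : ℕ} [Fact p.Prime] (hn : 0 < n)
    {a : ℤ} (h : (p : ℤ) ∣ (cyclotomic n ℤ).eval a)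
    (h' : ¬(p : ℤ) ∣ (derivative (cyclotomic n ℤ)).eval a) :
    ∃ ζ : ℚ_[p], IsPrimitiveRoot ζ n := by
  obtain ⟨z, hz⟩ := PadicInt.exists_aeval_eq_zero_of_dvd h h'
  refine ⟨z, (isRoot_cyclotomic_iff_charZero hn).mp ?_⟩
  have := aeval_algebraMap_apply ℚ_[p] z (cyclotomic n ℤ)
  rw [hz, map_zero, aeval_def, eval₂_eq_eval_map, map_cyclotomic] at this
  exact this

theorem splits_cyclotomic_of_isPrimitiveRoot {K L : Type*} [Field K] [Field L] [Algebra K L]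
    {n : ℕ} {ζ : L} (hζ : IsPrimitiveRoot ζ n) :
    Splits ((cyclotomic n K).map (algebraMap K L)) := by
  rw [map_cyclotomic]
  rcases n.eq_zero_or_pos with rfl | hn
  · simp
  exact (X_pow_sub_one_splits hζ).of_dvd (X_pow_sub_C_ne_zero hn 1)
    (by simpa using cyclotomic.dvd_X_pow_sub_one n L)

theorem nonempty_algHom_cyclotomicField_of_isPrimitiveRoot {K L : Type*} [Field K] [Field L]
    [Algebra K L] {n : ℕ} {ζ : L} (hζ : IsPrimitiveRoot ζ n) :
    Nonempty (CyclotomicField n K →ₐ[K] L) :=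
  ⟨SplittingField.lift _ (splits_cyclotomic_of_isPrimitiveRoot hζ)⟩

theorem PadicInt.isSquare_of_sq_add_p_mul_sq_eq {p : ℕ} [Fact p.Prime] {x y : ℤ_[p]} {u : ℤ}
    (h : x ^ 2 + p * y ^ 2 = u) : IsSquare (u : ZMod p) := by
  have := congrArg toZMod h
  simp only [map_add, map_pow, map_mul, map_natCast, CharP.cast_eq_zero, zero_mul, add_zero,
    map_intCast] at this
  exact ⟨toZMod x, by rw [← this, sq]⟩

namespace Padic

variable {p : ℕ} [hp : Fact p.Prime]

theorem norm_sq_ne_norm_p_mul_sq {x y : ℚ_[p]} (h : x ≠ 0 ∨ y ≠ 0) :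
    ‖x ^ 2‖ ≠ ‖(p : ℚ_[p]) * y ^ 2‖ := by
  have hp0 : (p : ℚ_[p]) ≠ 0 := Nat.cast_ne_zero.mpr hp.out.ne_zero
  rcases eq_or_ne x 0 with rfl | hx
  · simpa [hp.out.ne_zero, eq_comm] using h
  rcases eq_or_ne y 0 with rfl | hy
  · simpa using hx
  rw [norm_eq_zpow_neg_valuation (pow_ne_zero 2 hx),
    norm_eq_zpow_neg_valuation (mul_ne_zero hp0 (pow_ne_zero 2 hy)),
    valuation_mul hp0 (pow_ne_zero 2 hy), valuation_pow, valuation_pow, valuation_p]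
  intro heq
  have := zpow_right_injective₀ (mod_cast hp.out.pos) (mod_cast hp.out.ne_one) heq
  omega

theorem norm_sq_add_p_mul_sq (x y : ℚ_[p]) :
    ‖x ^ 2 + p * y ^ 2‖ = max ‖x ^ 2‖ ‖(p : ℚ_[p]) * y ^ 2‖ := by
  by_cases h : x = 0 ∧ y = 0
  · simp [h.1, h.2]
  · exact add_eq_max_of_ne (norm_sq_ne_norm_p_mul_sq (not_and_or.mp h))

theorem norm_le_one_of_norm_sq_add_p_mul_sq_le_one {x y : ℚ_[p]}
    (h : ‖x ^ 2 + p * y ^ 2‖ ≤ 1) : ‖x‖ ≤ 1 ∧ ‖y‖ ≤ 1 := by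
  rw [norm_sq_add_p_mul_sq, max_le_iff] at h
  obtain ⟨hx, hpy⟩ := h
  refine ⟨by simpa [norm_pow] using hx, ?_⟩
  rcases eq_or_ne y 0 with rfl | hy
  · simp
  have hp0 : (p : ℚ_[p]) ≠ 0 := Nat.cast_ne_zero.mpr hp.out.ne_zero
  rw [norm_le_one_iff_val_nonneg, valuation_mul hp0 (pow_ne_zero 2 hy), valuation_pow,
    valuation_p] at hpy
  rw [norm_le_one_iff_val_nonneg]
  omega

theorem not_exists_sq_add_p_mul_sq_eq {u : ℤ} (hu : ¬IsSquare (u : ZMod p)) : ¬∃ x y : ℚ_[p], x ^ 2 + p * y ^ 2 = u := by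
  rintro ⟨x, y, h⟩
  obtain ⟨hx, hy⟩ := norm_le_one_of_norm_sq_add_p_mul_sq_le_one (h ▸ norm_int_le_one u)
  exact hu (PadicInt.isSquare_of_sq_add_p_mul_sq_eq (x := ⟨x, hx⟩) (y := ⟨y, hy⟩)
    (PadicInt.ext (by push_cast; exact h)))

end Padic

instance fact_prime_thirteen : Fact (Nat.Prime 13) := ⟨by norm_num⟩

/-- There exist no elements `x, y` in `ℚ(ζ₃)` (the third cyclotomic field) with
`x² + 13 y² = 2`; equivalently, `2` is not a norm from `ℚ(ζ₃)(√-13)` to `ℚ(ζ₃)`. -/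
theorem two_not_norm_from_sqrt_neg_thirteen :
    ¬ ∃ x y : CyclotomicField 3 ℚ, x ^ 2 + 13 * y ^ 2 = 2 := by
  rintro ⟨x, y, h⟩
  obtain ⟨ζ, hζ⟩ : ∃ ζ : ℚ_[13], IsPrimitiveRoot ζ 3 :=
    Padic.exists_isPrimitiveRoot_of_dvd_cyclotomic_eval (a := 3) (by norm_num)
      (by simp [cyclotomic_three]) (by simp [cyclotomic_three])
  obtain ⟨φ⟩ := nonempty_algHom_cyclotomicField_of_isPrimitiveRoot (K := ℚ) hζ
  refine Padic.not_exists_sq_add_p_mul_sq_eq (p := 13) (u := 2) (by decide) ⟨φ x, φ y, ?_⟩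
  have hφ := congrArg φ h
  simp only [map_add, map_mul, map_pow, map_ofNat] at hφ
  exact_mod_cast hφ
end

section
/- Work inside ℂ. Let ζ₃ be a primitive third root of unity, ζ₇ a primitive seventh root of unity, L = ℚ(ζ₃, √2, √13) and E = L(ζ₇ + ζ₇⁻¹) = L(cos(2π/7)), a degree-3 extension of L. If p is a rational prime with p ≡ 3 (mod 7) or p ≡ 5 (mod 7), then p is not a norm from E to L: there is no x ∈ E with N_{E/L}(x) = p. -/
open scoped IntermediateField

/-- The field `L = ℚ(ζ₃, √2, √13) ⊆ ℂ`, generated over `ℚ` by a primitive third root of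
unity `ζ₃` and the real square roots of `2` and `13`. -/
noncomputable def Lfield (ζ₃ : ℂ) : IntermediateField ℚ ℂ :=
  ℚ⟮ζ₃, ((Real.sqrt 2 : ℝ) : ℂ), ((Real.sqrt 13 : ℝ) : ℂ)⟯

/-- The cubic extension `E = L(ζ₇ + ζ₇⁻¹) = L(cos(2π/7))` of `L`, inside `ℂ`. -/
noncomputable def Efield (ζ₃ ζ₇ : ℂ) : IntermediateField (Lfield ζ₃) ℂ :=
  IntermediateField.adjoin (Lfield ζ₃) {ζ₇ + ζ₇⁻¹}

/-!
Let `θ = ζ₇ + ζ₇⁻¹`, a root of `X³ + X² - 2X - 1`, and `K = ℚ(θ) ⊆ E`. If `N_{E/L}(x) = p`, then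
`N_{E/ℚ}(x) = p ^ [L : ℚ]`, and `[L : ℚ]` is a power of `2` because `L` is generated by three
elements of degree at most `2`. On the other hand `N_{E/ℚ}(x) = N_{K/ℚ}(N_{E/K}(x))`, and
`N_{K/ℚ}(a + bθ + cθ²)` is an integral cubic form in `a, b, c`.

For `p ≡ 3, 5 (mod 7)` the cubic stays irreducible mod `p`: a root in `𝔽_p` would be `u + u⁻¹` for a
primitive seventh root of unity `u` over `𝔽_p`, and Frobenius would have to send `u` to `u` or `u⁻¹`,
forcing `7 ∣ p - 1` or `7 ∣ p + 1`. So the norm form has no nontrivial zero mod `p`, and evaluating it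
on a primitive integral triple shows that the `p`-adic valuation of each of its nonzero values is
divisible by `3`, which `p ^ [L : ℚ]` is not.
-/

open Polynomial IntermediateField Module

theorem IsPrimitiveRoot.dvd_sub_one_or_dvd_add_one {K : Type*} [Field K] {p n : ℕ}
    [Fact p.Prime] [CharP K p] {u : K} (hu : IsPrimitiveRoot u n) (hn : n ≠ 0)
    (h : (u + u⁻¹) ^ p = u + u⁻¹) : n ∣ p - 1 ∨ n ∣ p + 1 := by
  have hu0 : u ≠ 0 := hu.ne_zero hn
  rw [add_pow_char, inv_pow] at h
  have hroot : (u ^ p - u) * (u ^ p - u⁻¹) = 0 := by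
    linear_combination u ^ p * h + mul_inv_cancel₀ hu0 - mul_inv_cancel₀ (pow_ne_zero p hu0)
  rcases mul_eq_zero.mp hroot with h1 | h1
  · refine .inl (hu.dvd_of_pow_eq_one _ (mul_right_cancel₀ hu0 ?_))
    rw [← pow_succ, Nat.sub_add_cancel (Fact.out : p.Prime).one_le, sub_eq_zero.mp h1, one_mul]
  · refine .inr (hu.dvd_of_pow_eq_one _ ?_)
    rw [pow_succ, sub_eq_zero.mp h1, inv_mul_cancel₀ hu0]

theorem IntermediateField.exists_finrank_adjoin_eq_two_pow {F E : Type*} [Field F] [Field E]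
    [Algebra F E] (S : Finset E)
    (hS : ∀ x ∈ S, ∃ b c : F, x ^ 2 + algebraMap F E b * x + algebraMap F E c = 0) :
    ∃ k, finrank F (adjoin F (S : Set E)) = 2 ^ k := by
  refine induction_on_adjoin_finset S (fun K => ∃ k, finrank F K = 2 ^ k) ⟨0, by simp⟩ ?_
  rintro K x hx ⟨k, hk⟩
  obtain ⟨b, c, hbc⟩ := hS x hx
  have : FiniteDimensional F K := Module.finite_of_finrank_pos (by rw [hk]; positivity)
  set q : K[X] := X ^ 2 + C (algebraMap F K b) * X + C (algebraMap F K c)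
  have hq : q.Monic := by simp only [q]; monicity!
  have hqx : aeval x q = 0 := by simpa [q, ← IsScalarTower.algebraMap_apply] using hbc
  have hint : IsIntegral K x := ⟨q, hq, hqx⟩
  have hdeg : (minpoly K x).natDegree ≤ 2 :=
    calc (minpoly K x).natDegree ≤ q.natDegree :=
          natDegree_le_of_dvd (minpoly.dvd K x hqx) hq.ne_zero
      _ = 2 := by simp only [q]; compute_degree!
  have hpos := minpoly.natDegree_pos hint
  have htower : finrank F (K⟮x⟯.restrictScalars F) = finrank F K * finrank K K⟮x⟯ :=
    (finrank_mul_finrank F K K⟮x⟯).symm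
  rw [htower, adjoin.finrank hint, hk]
  interval_cases (minpoly K x).natDegree
  · exact ⟨k, by ring⟩
  · exact ⟨k + 1, by ring⟩

theorem AlgHom.exists_norm_eq_norm {F K M : Type*} [Field F] [Field K] [Field M] [Algebra F K]
    [Algebra F M] (f : K →ₐ[F] M) (x : M) : ∃ y : K, Algebra.norm F y = Algebra.norm F x := by
  let := f.toAlgebra
  have : IsScalarTower F K M := IsScalarTower.of_algebraMap_eq fun a => (f.commutes a).symm
  exact ⟨Algebra.norm K x, Algebra.norm_norm⟩

theorem Rat.exists_eq_mul_intCast_gcd_eq_one {ι : Type*} [Fintype ι] [Nonempty ι] (q : ι → ℚ) :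
    ∃ (t : ℚ) (a : ι → ℤ), (∀ i, q i = t * a i) ∧ Finset.univ.gcd a = 1 := by
  obtain ⟨⟨D, hD⟩, hDq⟩ := IsLocalization.exist_integer_multiples_of_finite (nonZeroDivisors ℤ) q
  choose m hm using hDq
  obtain ⟨a, hma, ha⟩ := Finset.univ.extract_gcd m Finset.univ_nonempty
  refine ⟨((Finset.univ.gcd m : ℤ) : ℚ) / D, a, fun i => ?_, ha⟩
  have hD0 : (D : ℚ) ≠ 0 := by exact_mod_cast nonZeroDivisors.ne_zero hD
  have hmi := hm i
  simp only [algebraMap_int_eq, eq_intCast, zsmul_eq_mul] at hmi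
  rw [div_mul_eq_mul_div, eq_div_iff hD0, ← Int.cast_mul, ← hma i (Finset.mem_univ i), hmi,
    mul_comm]

namespace SevenPeriod

noncomputable def cubic (R : Type*) [CommRing R] : R[X] := X ^ 3 + X ^ 2 - 2 * X - 1

/-- `N(a + bθ + cθ²)` for a root `θ` of `cubic`, see `norm_eq_normForm_repr`. -/
def normForm {R : Type*} [CommRing R] (a b c : R) : R :=
  a ^ 3 - a ^ 2 * b + 5 * a ^ 2 * c - 2 * a * b ^ 2 - a * b * c + 6 * a * c ^ 2 + b ^ 3
    - b ^ 2 * c - 2 * b * c ^ 2 + c ^ 3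

section CommRing

variable {R S : Type*} [CommRing R] [CommRing S]

@[simp]
theorem eval_cubic (x : R) : (cubic R).eval x = x ^ 3 + x ^ 2 - 2 * x - 1 := by
  simp [cubic]

@[simp]
theorem aeval_cubic [Algebra R S] (x : S) : aeval x (cubic R) = x ^ 3 + x ^ 2 - 2 * x - 1 := by
  simp [cubic, map_ofNat]

@[simp]
theorem map_cubic (f : R →+* S) : (cubic R).map f = cubic S := by
  simp [cubic]

theorem monic_cubic [Nontrivial R] : (cubic R).Monic := by
  unfold cubic; monicity!

theorem natDegree_cubic [Nontrivial R] : (cubic R).natDegree = 3 := by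
  unfold cubic; compute_degree!

theorem map_normForm (f : R →+* S) (a b c : R) :
    f (normForm a b c) = normForm (f a) (f b) (f c) := by
  simp [normForm, map_ofNat]

theorem normForm_mul_left (t a b c : R) :
    normForm (t * a) (t * b) (t * c) = t ^ 3 * normForm a b c := by
  unfold normForm; ring

end CommRing

theorem eval_cubic_add_inv_mul_pow_three {K : Type*} [Field K] {u : K} (hu : u ≠ 0) :
    (cubic K).eval (u + u⁻¹) * u ^ 3 = (cyclotomic 7 K).eval u := by
  have : Fact (Nat.Prime 7) := ⟨by norm_num⟩
  simp only [eval_cubic, cyclotomic_prime, Finset.sum_range_succ, Finset.range_one,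
    Finset.sum_singleton, pow_zero, pow_one, eval_add, eval_one, eval_X, eval_pow]
  field_simp
  ring

theorem _root_.IsPrimitiveRoot.isRoot_cubic_add_inv {K : Type*} [Field K] {ζ : K}
    (hζ : IsPrimitiveRoot ζ 7) : (cubic K).IsRoot (ζ + ζ⁻¹) := by
  have hζ0 : ζ ≠ 0 := hζ.ne_zero (by norm_num)
  have h := eval_cubic_add_inv_mul_pow_three hζ0
  rw [(hζ.isRoot_cyclotomic (by norm_num)).eq_zero, mul_eq_zero] at h
  exact h.resolve_right (pow_ne_zero _ hζ0)

section NormForm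

variable {F S : Type*} [Field F] [CommRing S] [Algebra F S]

theorem leftMulMatrix_eq_companion {g : S} (B : Basis (Fin 3) F S)
    (hB : ∀ i, B i = g ^ (i : ℕ)) (hg : aeval g (cubic F) = 0) :
    Algebra.leftMulMatrix B g = !![0, 0, 1; 1, 0, 2; 0, 1, -1] := by
  have h0 : g * B 0 = B 1 := by simp [hB]
  have h1 : g * B 1 = B 2 := by simp [hB, sq]
  have h2 : g * B 2 = B 0 + (2 : F) • B 1 - B 2 := by
    simp only [hB, Fin.val_zero, Fin.val_one, Fin.val_two, two_smul]
    linear_combination (aeval_cubic (R := F) g).symm.trans hg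
  ext i j
  rw [Algebra.leftMulMatrix_eq_repr_mul]
  fin_cases j <;> simp only [Fin.zero_eta, Fin.mk_one, Fin.reduceFinMk, h0, h1, h2] <;>
    fin_cases i <;> simp

theorem norm_eq_normForm_repr {g : S} (B : Basis (Fin 3) F S)
    (hB : ∀ i, B i = g ^ (i : ℕ)) (hg : aeval g (cubic F) = 0) (y : S) :
    Algebra.norm F y = normForm (B.repr y 0) (B.repr y 1) (B.repr y 2) := by
  conv_lhs => rw [← B.sum_repr y]
  rw [Algebra.norm_eq_matrix_det B, Fin.sum_univ_three, map_add, map_add, map_smul, map_smul,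
    map_smul, hB, hB, hB]
  simp only [Fin.val_zero, Fin.val_one, Fin.val_two, pow_zero, pow_one, map_one, map_pow,
    leftMulMatrix_eq_companion B hB hg]
  simp [Matrix.det_fin_three, normForm, sq]
  ring

theorem normForm_eq_zero_of_irreducible (h : Irreducible (cubic F)) {a b c : F}
    (habc : normForm a b c = 0) : a = 0 ∧ b = 0 ∧ c = 0 := by
  have : Fact (Irreducible (cubic F)) := ⟨h⟩
  let pb := AdjoinRoot.powerBasis (monic_cubic (R := F)).ne_zero
  have := pb.finite
  have hdim : pb.dim = 3 := natDegree_cubic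
  let B := pb.basis.reindex (finCongr hdim)
  have hB : ∀ i, B i = pb.gen ^ (i : ℕ) := by simp [B]
  have hg : aeval pb.gen (cubic F) = 0 := by
    rw [AdjoinRoot.powerBasis_gen, AdjoinRoot.aeval_eq, AdjoinRoot.mk_self]
  have hrepr (i : Fin 3) : B.repr (B.equivFun.symm ![a, b, c]) i = ![a, b, c] i := by
    rw [← B.equivFun_apply, LinearEquiv.apply_symm_apply]
  have hzero : B.equivFun.symm ![a, b, c] = 0 := by
    rw [← Algebra.norm_eq_zero_iff (R := F), norm_eq_normForm_repr B hB hg, hrepr, hrepr, hrepr]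
    exact habc
  simpa using (LinearEquiv.map_eq_zero_iff _).mp hzero

end NormForm

theorem not_isRoot_cubic_zmod {p : ℕ} [Fact p.Prime] (hp : p % 7 = 3 ∨ p % 7 = 5) (t : ZMod p) :
    ¬ (cubic (ZMod p)).IsRoot t := by
  intro ht
  let K := AlgebraicClosure (ZMod p)
  obtain ⟨u, hu⟩ := IsAlgClosed.exists_root (X ^ 2 - C (algebraMap (ZMod p) K t) * X + 1)
    (by rw [show degree _ = 2 by compute_degree!]; decide)
  simp only [IsRoot, eval_add, eval_sub, eval_pow, eval_mul, eval_C, eval_X, eval_one] at hu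
  have hu0 : u ≠ 0 := by rintro rfl; simp at hu
  have htu : algebraMap (ZMod p) K t = u + u⁻¹ := by
    linear_combination (-u⁻¹) * hu + (u - algebraMap (ZMod p) K t) * mul_inv_cancel₀ hu0
  have : NeZero ((7 : ℕ) : K) := ⟨by
    rw [Ne, CharP.cast_eq_zero_iff K p]
    intro h
    have := (Nat.prime_dvd_prime_iff_eq Fact.out (by norm_num)).mp h
    omega⟩
  have hprim : IsPrimitiveRoot u 7 := by
    have hK : (cubic K).IsRoot (u + u⁻¹) := by
      simpa [htu] using ht.map (f := algebraMap (ZMod p) K)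
    rw [← isRoot_cyclotomic_iff, IsRoot, ← eval_cubic_add_inv_mul_pow_three hu0, hK.eq_zero,
      zero_mul]
  have hfrob : (u + u⁻¹) ^ p = u + u⁻¹ := by
    rw [← htu, ← map_pow, ZMod.pow_card]
  have := hprim.dvd_sub_one_or_dvd_add_one (by norm_num) hfrob
  omega

theorem irreducible_cubic_zmod {p : ℕ} [Fact p.Prime] (hp : p % 7 = 3 ∨ p % 7 = 5) :
    Irreducible (cubic (ZMod p)) := by
  rw [irreducible_iff_roots_eq_zero_of_degree_le_three (by rw [natDegree_cubic]; norm_num)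
    (by rw [natDegree_cubic]), Multiset.eq_zero_iff_forall_notMem]
  exact fun t ht => not_isRoot_cubic_zmod hp t (isRoot_of_mem_roots ht)

theorem irreducible_cubic_rat : Irreducible (cubic ℚ) := by
  have : Fact (Nat.Prime 3) := ⟨by norm_num⟩
  have hZ : Irreducible (cubic ℤ) :=
    Monic.irreducible_of_irreducible_map (Int.castRingHom (ZMod 3)) _ monic_cubic
      (by rw [map_cubic]; exact irreducible_cubic_zmod (.inl rfl))
  rw [← map_cubic (Int.castRingHom ℚ)]
  exact (IsPrimitive.Int.irreducible_iff_irreducible_map_cast monic_cubic.isPrimitive).mp hZ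

theorem not_dvd_normForm {p : ℕ} [Fact p.Prime] (hp : p % 7 = 3 ∨ p % 7 = 5) {a b c : ℤ}
    (habc : ¬ ((p : ℤ) ∣ a ∧ (p : ℤ) ∣ b ∧ (p : ℤ) ∣ c)) : ¬ (p : ℤ) ∣ normForm a b c := by
  simp only [← ZMod.intCast_zmod_eq_zero_iff_dvd] at habc ⊢
  have hcast := map_normForm (Int.castRingHom (ZMod p)) a b c
  simp only [eq_intCast] at hcast
  rw [hcast]
  exact fun h => habc (normForm_eq_zero_of_irreducible (F := ZMod p) (irreducible_cubic_zmod hp) h)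

theorem three_dvd_padicValRat_normForm {p : ℕ} [Fact p.Prime] (hp : p % 7 = 3 ∨ p % 7 = 5)
    {q₀ q₁ q₂ : ℚ} (hq : normForm q₀ q₁ q₂ ≠ 0) : 3 ∣ padicValRat p (normForm q₀ q₁ q₂) := by
  obtain ⟨t, a, hta, ha⟩ := Rat.exists_eq_mul_intCast_gcd_eq_one ![q₀, q₁, q₂]
  have hscale : normForm q₀ q₁ q₂ = t ^ 3 * ((normForm (a 0) (a 1) (a 2) : ℤ) : ℚ) := by
    rw [← eq_intCast (Int.castRingHom ℚ), map_normForm, ← normForm_mul_left]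
    simp only [eq_intCast, ← hta]
    rfl
  have hprimitive : ¬ ((p : ℤ) ∣ a 0 ∧ (p : ℤ) ∣ a 1 ∧ (p : ℤ) ∣ a 2) := by
    rintro ⟨h0, h1, h2⟩
    have : (p : ℤ) ∣ Finset.univ.gcd a := Finset.dvd_gcd fun i _ => by fin_cases i <;> assumption
    rw [ha, ← Nat.cast_one, Int.natCast_dvd_natCast] at this
    exact (Fact.out : p.Prime).not_dvd_one this
  rw [hscale] at hq ⊢
  rw [padicValRat.mul (left_ne_zero_of_mul hq) (right_ne_zero_of_mul hq), padicValRat.pow,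
    padicValRat.of_int, padicValInt.eq_zero_of_not_dvd (not_dvd_normForm hp hprimitive)]
  exact ⟨padicValRat p t, by push_cast; ring⟩

theorem norm_ne_prime_pow {E : Type*} [Field E] [CharZero E] {α : E}
    (hα : aeval α (cubic ℚ) = 0) {p : ℕ} [Fact p.Prime] (hp : p % 7 = 3 ∨ p % 7 = 5) {n : ℕ}
    (hn : ¬ 3 ∣ n) (y : ℚ⟮α⟯) : Algebra.norm ℚ y ≠ (p : ℚ) ^ n := by
  have hint : IsIntegral ℚ α := ⟨cubic ℚ, monic_cubic, hα⟩
  have hmin : minpoly ℚ α = cubic ℚ :=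
    (minpoly.eq_of_irreducible_of_monic irreducible_cubic_rat hα monic_cubic).symm
  let pb := adjoin.powerBasis hint
  have hdim : pb.dim = 3 := by
    show (minpoly ℚ α).natDegree = 3
    rw [hmin, natDegree_cubic]
  let B := pb.basis.reindex (finCongr hdim)
  have hB : ∀ i, B i = pb.gen ^ (i : ℕ) := by simp [B]
  have hg : aeval pb.gen (cubic ℚ) = 0 := by
    rw [← hmin, adjoin.powerBasis_gen, ← minpoly_gen]
    exact minpoly.aeval _ _
  intro h
  -- not `rw`: `pb` carries the `ℚ`-algebra `ℚ⟮α⟯.algebra'`, which agrees with the synthesized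
  -- `DivisionRing.toRatAlgebra` only up to unfolding
  have hN : normForm (B.repr y 0) (B.repr y 1) (B.repr y 2) = (p : ℚ) ^ n :=
    (norm_eq_normForm_repr B hB hg y).symm.trans h
  have h3 := three_dvd_padicValRat_normForm hp
    (hN ▸ pow_ne_zero n (by exact_mod_cast (Fact.out : p.Prime).ne_zero))
  rw [hN, padicValRat.pow, padicValRat.self (Fact.out : p.Prime).one_lt, mul_one] at h3
  exact hn (by exact_mod_cast h3)

end SevenPeriod

open SevenPeriod

theorem finrank_Lfield_eq_two_pow {ζ₃ : ℂ} (h₃ : IsPrimitiveRoot ζ₃ 3) :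
    ∃ k, finrank ℚ (Lfield ζ₃) = 2 ^ k := by
  classical
  have h := exists_finrank_adjoin_eq_two_pow (F := ℚ)
    ({ζ₃, ((Real.sqrt 2 : ℝ) : ℂ), ((Real.sqrt 13 : ℝ) : ℂ)} : Finset ℂ) ?_
  · rwa [Finset.coe_insert, Finset.coe_insert, Finset.coe_singleton] at h
  simp only [Finset.mem_insert, Finset.mem_singleton]
  rintro x (rfl | rfl | rfl)
  · refine ⟨1, 1, ?_⟩
    rw [map_one]
    linear_combination (by simpa [Finset.sum_range_succ] using h₃.geom_sum_eq_zero (by norm_num) :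
      1 + x + x ^ 2 = 0)
  · exact ⟨0, -2, by simp [← Complex.ofReal_pow]⟩
  · exact ⟨0, -13, by simp [← Complex.ofReal_pow]⟩

/-- Work inside `ℂ`.  Let `ζ₃` be a primitive third root of unity, `ζ₇` a primitive seventh
root of unity, `L = ℚ(ζ₃, √2, √13)` and `E = L(ζ₇ + ζ₇⁻¹) = L(cos(2π/7))`, a degree-3
extension of `L`.  If `p` is a rational prime with `p ≡ 3 (mod 7)` or `p ≡ 5 (mod 7)`,
then `p` is not a norm from `E` to `L`: there is no `x ∈ E` with `N_{E/L}(x) = p`. -/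
theorem prime_three_or_five_mod_seven_not_norm_from_E_to_L
    (ζ₃ ζ₇ : ℂ) (h₃ : IsPrimitiveRoot ζ₃ 3) (h₇ : IsPrimitiveRoot ζ₇ 7)
    (p : ℕ) (hp : p.Prime) (hmod : p % 7 = 3 ∨ p % 7 = 5) :
    ¬ ∃ x : Efield ζ₃ ζ₇, Algebra.norm (Lfield ζ₃) x = (p : Lfield ζ₃) := by
  have : Fact p.Prime := ⟨hp⟩
  rintro ⟨x, hx⟩
  obtain ⟨k, hk⟩ := finrank_Lfield_eq_two_pow h₃
  have hnorm : Algebra.norm ℚ x = (p : ℚ) ^ 2 ^ k := by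
    rw [← Algebra.norm_norm (S := Lfield ζ₃), hx, ← map_natCast (algebraMap ℚ (Lfield ζ₃)),
      Algebra.norm_algebraMap, hk]
  have hle : ℚ⟮ζ₇ + ζ₇⁻¹⟯ ≤ (Efield ζ₃ ζ₇).restrictScalars ℚ :=
    adjoin_simple_le_iff.mpr (mem_adjoin_simple_self (Lfield ζ₃) (ζ₇ + ζ₇⁻¹))
  let incl : ℚ⟮ζ₇ + ζ₇⁻¹⟯ →+* Efield ζ₃ ζ₇ := (inclusion hle).toRingHom
  obtain ⟨y, hy⟩ := incl.toRatAlgHom.exists_norm_eq_norm x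
  have hα : aeval (ζ₇ + ζ₇⁻¹) (cubic ℚ) = 0 := by simpa using h₇.isRoot_cubic_add_inv
  have h2k : ¬ 3 ∣ 2 ^ k := fun h => by
    have := Nat.prime_three.dvd_of_dvd_pow h
    norm_num at this
  exact norm_ne_prime_pow hα hmod h2k y (hy.trans hnorm)
end
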